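/- For every real number s, the determinant det( cosh(s·b) • (1 : E →ₗ[ℝ] E) − (sinh(s·b)/b) • A ) vanishes if and only if there exists a real eigenvalue λ of A with |λ| > b and s = Real.artanh (b/λ) / b. (In particular, eigenvalues λ with |λ| ≤ b contribute no real zero.) -/

import Mathlib

/-- The inverse hyperbolic tangent on `(-1, 1)` (not present in Mathlib),
`artanh x = (1/2) · log((1+x)/(1-x))`. -/
noncomputable def Real.artanhLogFormula (x : ℝ) : ℝ := (1 / 2) * Real.log ((1 + x) / (1 - x))

/-!
For `t = s b` the operator is `cosh t • 1 - (sinh t / b) • A`. As `cosh t ≠ 0`, it is singular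
exactly when `sinh t ≠ 0` and `b cosh t / sinh t = b / tanh t` is an eigenvalue `λ` of `A`.
Since `tanh` is a bijection from `ℝ` onto `(-1, 1)` with inverse `artanh`, the relation
`tanh t = b / λ` is equivalent to `|λ| > b` together with `t = artanh (b / λ)`.
-/

namespace Module.End

theorem hasEigenvalue_iff_det_sub_smul_one_eq_zero {R M : Type*} [CommRing R] [IsDomain R]
    [AddCommGroup M] [Module R M] [Module.Free R M] [Module.Finite R M] (f : End R M) (μ : R) :
    f.HasEigenvalue μ ↔ (f - μ • 1).det = 0 := by
  rw [hasEigenvalue_iff, eigenspace_def, ← LinearMap.det_eq_zero_iff_ker_ne_bot]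

theorem det_smul_one_sub_smul_eq_zero_iff {K V : Type*} [Field K] [AddCommGroup V] [Module K V]
    [FiniteDimensional K V] {c : K} (hc : c ≠ 0) (d : K) (f : End K V) :
    (c • 1 - d • f).det = 0 ↔ d ≠ 0 ∧ f.HasEigenvalue (c / d) := by
  rcases eq_or_ne d 0 with rfl | hd
  · simp [LinearMap.det_smul, hc]
  · have hfactor : c • 1 - d • f = (-d) • (f - (c / d) • 1) := by
      rw [smul_sub, smul_smul, neg_mul, mul_div_cancel₀ c hd]
      module
    rw [hfactor, LinearMap.det_smul, hasEigenvalue_iff_det_sub_smul_one_eq_zero]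
    simp [hd]

end Module.End

theorem Real.artanhLogFormula_eq_artanh {x : ℝ} (hx : x ∈ Set.Icc (-1) 1) :
    Real.artanhLogFormula x = Real.artanh x :=
  (Real.artanh_eq_half_log hx).symm

theorem Real.artanhLogFormula_tanh (x : ℝ) : Real.artanhLogFormula (Real.tanh x) = x := by
  rw [Real.artanhLogFormula_eq_artanh, Real.artanh_tanh]
  exact ⟨(Real.neg_one_lt_tanh x).le, (Real.tanh_lt_one x).le⟩

theorem Real.tanh_artanhLogFormula {x : ℝ} (hx : |x| < 1) :
    Real.tanh (Real.artanhLogFormula x) = x := by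
  obtain ⟨hlo, hhi⟩ := abs_lt.mp hx
  rw [Real.artanhLogFormula_eq_artanh ⟨hlo.le, hhi.le⟩, Real.tanh_artanh ⟨hlo, hhi⟩]

theorem Real.tanh_eq_div_iff {a l t : ℝ} (ha : 0 < a) (hl : l ≠ 0) :
    Real.tanh t = a / l ↔ a < |l| ∧ t = Real.artanhLogFormula (a / l) := by
  have habs : |a / l| < 1 ↔ a < |l| := by
    rw [abs_div, abs_of_pos ha, div_lt_one (abs_pos.mpr hl)]
  constructor
  · intro htanh
    rw [← habs, ← htanh, Real.artanhLogFormula_tanh]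
    exact ⟨Real.abs_tanh_lt_one t, rfl⟩
  · rintro ⟨hal, rfl⟩
    exact Real.tanh_artanhLogFormula (habs.mpr hal)

theorem det_cosh_smul_sub_sinh_smul_eq_zero_iff_general
    {E : Type*} [NormedAddCommGroup E] [InnerProductSpace ℝ E] [FiniteDimensional ℝ E]
    (A : E →ₗ[ℝ] E) (b : ℝ) (hb : 0 < b) (s : ℝ) :
    LinearMap.det (Real.cosh (s * b) • (1 : E →ₗ[ℝ] E) - (Real.sinh (s * b) / b) • A) = 0 ↔
      ∃ l : ℝ, Module.End.HasEigenvalue A l ∧ b < |l| ∧ s = Real.artanhLogFormula (b / l) / b := by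
  set t := s * b
  have hcosh : Real.cosh t ≠ 0 := (Real.cosh_pos t).ne'
  have hsinh : Real.sinh t / b ≠ 0 ↔ Real.tanh t ≠ 0 := by
    simp [Real.tanh_eq_sinh_div_cosh, hb.ne', hcosh]
  have heigenvalue : Real.cosh t / (Real.sinh t / b) = b / Real.tanh t := by
    rw [Real.tanh_eq_sinh_div_cosh]
    field_simp
  rw [Module.End.det_smul_one_sub_smul_eq_zero_iff hcosh, hsinh, heigenvalue]
  constructor
  · rintro ⟨htanh, hl⟩
    obtain ⟨hbl, ht⟩ := (Real.tanh_eq_div_iff hb (div_ne_zero hb.ne' htanh)).mp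
      (div_div_cancel₀ hb.ne').symm
    exact ⟨_, hl, hbl, (eq_div_iff hb.ne').mpr ht⟩
  · rintro ⟨l, hl, hbl, hs⟩
    have hl0 : l ≠ 0 := abs_pos.mp (hb.trans hbl)
    have htanh := (Real.tanh_eq_div_iff hb hl0).mpr ⟨hbl, (eq_div_iff hb.ne').mp hs⟩
    rw [htanh, div_div_cancel₀ hb.ne']
    exact ⟨div_ne_zero hb.ne' hl0, hl⟩

/-- Let `E` be a finite-dimensional real inner product space, `A` a self-adjoint
endomorphism of `E` and `b > 0`.  For every real number `s`, the determinant
`det(cosh(s·b) • id − (sinh(s·b)/b) • A)` vanishes if and only if there exists a real eigenvalue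
`λ` of `A` with `|λ| > b` and `s = artanh (b/λ) / b`. -/
theorem det_cosh_smul_sub_sinh_smul_eq_zero_iff
    {E : Type*} [NormedAddCommGroup E] [InnerProductSpace ℝ E] [FiniteDimensional ℝ E]
    (A : E →ₗ[ℝ] E) (hA : A.IsSymmetric) (b : ℝ) (hb : 0 < b) (s : ℝ) :
    LinearMap.det (Real.cosh (s * b) • (1 : E →ₗ[ℝ] E) - (Real.sinh (s * b) / b) • A) = 0 ↔
      ∃ l : ℝ, Module.End.HasEigenvalue A l ∧ b < |l| ∧ s = Real.artanhLogFormula (b / l) / b :=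
  det_cosh_smul_sub_sinh_smul_eq_zero_iff_general A b hb s
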